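/- arXiv:1201.5088 — 4 statements merged into one kernel-verified Lean document; each statement's English description precedes it below -/
import Mathlib

section
/- Let s, t ∈ ℂ with s ≠ 0 and |t| < 1. Then ∑_{N=1}^{∞} (t^N/N!) · (∑_{k=0}^{N−1} a_k(N)·s^k) = (exp(−s·log(1−t)) − 1)/s, where log denotes the principal branch of the complex logarithm. -/
open Finset

/-- The coefficients `a_k(N) = (N!/(k+1)!) · ∑_{l₁+⋯+l_{k+1}=N, lᵢ ≥ 1} 1/(l₁⋯l_{k+1})`
for `0 ≤ k ≤ N-1`, as complex numbers. -/
noncomputable def aCoeff (N k : ℕ) : ℂ :=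
  ((N.factorial : ℂ) / ((k + 1).factorial : ℂ)) *
    ∑ l ∈ (Finset.Nat.antidiagonalTuple (k + 1) N).filter (fun l => ∀ i, 0 < l i),
      (∏ i, (l i : ℂ))⁻¹

/-! Write `L = -log (1 - t) = ∑_{n ≥ 1} tⁿ / n`. Multiplying out `L ^ (k + 1)` shows that its
`t ^ N`-coefficient is the composition sum `∑ 1 / (l₁ ⋯ l_{k+1})`, so the `(k, N)` term of the double
series is `s ^ k / (k + 1)!` times the `t ^ N` term of `L ^ (k + 1)`. Summing over `N` first leaves
`∑_k s ^ k L ^ (k + 1) / (k + 1)! = (exp (s L) - 1) / s`. The same computation with `‖s‖` and `‖t‖`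
bounds the double series absolutely, which justifies summing over `k` first instead. -/

section TupleProducts

variable {R ι : Type*} [NormedCommRing R] {f : ι → R}

lemma summable_norm_prod_fin_apply (hf : Summable fun n => ‖f n‖) :
    ∀ m : ℕ, Summable fun l : Fin m → ι => ‖∏ i, f (l i)‖
  | 0 => .of_finite
  | m + 1 => by
    rw [← (Fin.consEquiv fun _ => ι).summable_iff]
    simpa [Function.comp_def, Fin.prod_univ_succ] using
      hf.mul_norm (summable_norm_prod_fin_apply hf m)

lemma hasSum_prod_fin_apply [CompleteSpace R] (hf : Summable fun n => ‖f n‖) :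
    ∀ m : ℕ, HasSum (fun l : Fin m → ι => ∏ i, f (l i)) ((∑' n, f n) ^ m)
  | 0 => by simp
  | m + 1 => by
    rw [← (Fin.consEquiv fun _ => ι).hasSum_iff, pow_succ',
      ← (hasSum_prod_fin_apply hf m).tsum_eq,
      tsum_mul_tsum_of_summable_norm hf (summable_norm_prod_fin_apply hf m)]
    simpa [Function.comp_def, Fin.prod_univ_succ] using
      (summable_mul_of_summable_norm hf (summable_norm_prod_fin_apply hf m)).hasSum

end TupleProducts

theorem HasSum.sum_antidiagonalTuple {α : Type*} [AddCommMonoid α] [TopologicalSpace α]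
    [ContinuousAdd α] [RegularSpace α] {m : ℕ} {F : (Fin m → ℕ) → α} {S : α}
    (h : HasSum F S) : HasSum (fun N => ∑ l ∈ Nat.antidiagonalTuple m N, F l) S := by
  refine ((Equiv.sigmaFiberEquiv fun l : Fin m → ℕ => ∑ i, l i).hasSum_iff.mpr h).sigma
    fun N => ?_
  exact (Equiv.subtypeEquivRight fun l => Nat.mem_antidiagonalTuple).hasSum_iff.mp
    ((Nat.antidiagonalTuple m N).hasSum F)

lemma hasSum_sum_antidiagonalTuple_prod {R : Type*} [NormedCommRing R] [CompleteSpace R]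
    {f : ℕ → R} (hf : Summable fun n => ‖f n‖) (m : ℕ) :
    HasSum (fun N => ∑ l ∈ Nat.antidiagonalTuple m N, ∏ i, f (l i)) ((∑' n, f n) ^ m) :=
  (hasSum_prod_fin_apply hf m).sum_antidiagonalTuple

section CompositionSum

variable (K : Type*) [Field K]

def compositionSum (m N : ℕ) : K :=
  ∑ l ∈ (Nat.antidiagonalTuple m N).filter (fun l => ∀ i, 0 < l i), (∏ i, (l i : K))⁻¹

variable {K}

lemma compositionSum_eq_zero_of_lt {m N : ℕ} (h : N < m) : compositionSum K m N = 0 := by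
  refine sum_eq_zero fun l hl => absurd h (not_lt.mpr ?_)
  obtain ⟨hlN, hpos⟩ := mem_filter.mp hl
  calc m = ∑ _i : Fin m, 1 := by simp
    _ ≤ ∑ i, l i := sum_le_sum fun i _ => hpos i
    _ = N := Nat.mem_antidiagonalTuple.mp hlN

lemma map_compositionSum {L : Type*} [Field L] (φ : K →+* L) (m N : ℕ) :
    φ (compositionSum K m N) = compositionSum L m N := by
  simp [compositionSum]

lemma compositionSum_nonneg (m N : ℕ) : 0 ≤ compositionSum ℝ m N :=
  sum_nonneg fun _ _ => inv_nonneg.mpr (prod_nonneg fun _ _ => Nat.cast_nonneg _)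

lemma norm_compositionSum (m N : ℕ) : ‖compositionSum ℂ m N‖ = compositionSum ℝ m N := by
  rw [← map_compositionSum Complex.ofRealHom, Complex.ofRealHom_eq_coe, Complex.norm_of_nonneg
    (compositionSum_nonneg m N)]

-- Tuples with a zero entry drop out because `x ^ 0 / 0 = 0`.
lemma sum_antidiagonalTuple_prod_pow_div (x : K) (m N : ℕ) :
    ∑ l ∈ Nat.antidiagonalTuple m N, ∏ i, x ^ l i / (l i : K) = x ^ N * compositionSum K m N := by
  have hpos : ∀ l ∈ Nat.antidiagonalTuple m N, ∏ i, x ^ l i / (l i : K) ≠ 0 → ∀ i, 0 < l i :=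
    fun l _ hl i => Nat.pos_of_ne_zero fun h0 => prod_ne_zero_iff.mp hl i (mem_univ i) (by simp [h0])
  rw [← sum_filter_of_ne hpos, compositionSum, mul_sum]
  refine sum_congr rfl fun l hl => ?_
  rw [prod_div_distrib, prod_pow_eq_pow_sum, Nat.mem_antidiagonalTuple.mp (mem_filter.mp hl).1,
    div_eq_mul_inv]

lemma hasSum_pow_mul_compositionSum {K : Type*} [NormedField K] [CompleteSpace K] {x : K}
    (hx : Summable fun n : ℕ => ‖x ^ n / n‖) (m : ℕ) :
    HasSum (fun N => x ^ N * compositionSum K m N) ((∑' n : ℕ, x ^ n / n) ^ m) := by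
  simpa only [sum_antidiagonalTuple_prod_pow_div] using hasSum_sum_antidiagonalTuple_prod hx m

end CompositionSum

lemma aCoeff_eq (N k : ℕ) :
    aCoeff N k = (N.factorial : ℂ) / (k + 1).factorial * compositionSum ℂ (k + 1) N := rfl

lemma summable_norm_pow_div_natCast {t : ℂ} (ht : ‖t‖ < 1) :
    Summable fun n : ℕ => ‖t ^ n / n‖ := by
  refine .of_nonneg_of_le (fun _ => norm_nonneg _) (fun n => ?_)
    (summable_geometric_of_lt_one (norm_nonneg t) ht)
  rcases n.eq_zero_or_pos with rfl | hn
  · simp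
  · rw [norm_div, norm_pow, Complex.norm_natCast]
    exact div_le_self (by positivity) (by exact_mod_cast hn)

lemma hasSum_fiberwise_comm {α β γ : Type*} [AddCommMonoid α] [TopologicalSpace α]
    [ContinuousAdd α] [T3Space α] {f : β × γ → α} {g : β → α} {h : γ → α} {a : α}
    (hf : Summable f) (hrow : ∀ b, HasSum (fun c => f (b, c)) (g b))
    (hcol : ∀ c, HasSum (fun b => f (b, c)) (h c)) (hg : HasSum g a) : HasSum h a := by
  have hfa : HasSum f a := (hf.hasSum.prod_fiberwise hrow).unique hg ▸ hf.hasSum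
  exact ((Equiv.prodComm γ β).hasSum_iff.mpr hfa).prod_fiberwise hcol

lemma hasSum_pow_mul_pow_succ_div_factorial {𝕜 : Type*} [RCLike 𝕜] {s : 𝕜} (hs : s ≠ 0)
    (L : 𝕜) :
    HasSum (fun k : ℕ => s ^ k / (k + 1).factorial * L ^ (k + 1))
      ((NormedSpace.exp (s * L) - 1) / s) := by
  have h := (hasSum_nat_add_iff' 1).mpr (NormedSpace.expSeries_div_hasSum_exp (s * L))
  simp only [range_one, sum_singleton, pow_zero, Nat.factorial_zero, Nat.cast_one, div_one] at h
  convert h.div_const s using 2 with k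
  field_simp
  ring

noncomputable def compositionSeries (s t : ℂ) (p : ℕ × ℕ) : ℂ :=
  s ^ p.1 / (p.1 + 1).factorial * (t ^ p.2 * compositionSum ℂ (p.1 + 1) p.2)

lemma pow_div_factorial_mul_aCoeff_mul_pow (s t : ℂ) (N k : ℕ) :
    t ^ N / N.factorial * (aCoeff N k * s ^ k) = compositionSeries s t (k, N) := by
  have hN : (N.factorial : ℂ) ≠ 0 := Nat.cast_ne_zero.mpr N.factorial_ne_zero
  rw [aCoeff_eq, compositionSeries]
  field_simp

lemma summable_compositionSeries {s t : ℂ} (hs : s ≠ 0) (ht : ‖t‖ < 1) :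
    Summable (compositionSeries s t) := by
  set Λ := ∑' n : ℕ, ‖t‖ ^ n / n
  have hx : Summable fun n : ℕ => ‖‖t‖ ^ n / n‖ := by
    simpa using summable_norm_pow_div_natCast ht
  have hrow (k : ℕ) : HasSum (fun N => ‖compositionSeries s t (k, N)‖)
      (‖s‖ ^ k / (k + 1).factorial * Λ ^ (k + 1)) := by
    simpa [compositionSeries, norm_compositionSum] using
      (hasSum_pow_mul_compositionSum hx (k + 1)).mul_left (‖s‖ ^ k / (k + 1).factorial)
  refine Summable.of_norm ((summable_prod_of_nonneg fun _ => norm_nonneg _).mpr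
    ⟨fun k => (hrow k).summable, ?_⟩)
  simpa only [(hrow _).tsum_eq] using
    (hasSum_pow_mul_pow_succ_div_factorial (norm_ne_zero_iff.mpr hs) Λ).summable

/-- The generating function `g(t,s) = ∑_{N ≥ 1} (t^N/N!) ∑_{k=0}^{N-1} a_k(N) s^k`
equals `(e^{-s·log(1-t)} - 1)/s` for `|t| < 1`, `s ≠ 0`. -/
theorem aCoeff_generating_function (s t : ℂ) (hs : s ≠ 0) (ht : ‖t‖ < 1) :
    HasSum
      (fun N : ℕ =>
        (t ^ (N + 1) / ((N + 1).factorial : ℂ)) *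
          ∑ k ∈ Finset.range (N + 1), aCoeff (N + 1) k * s ^ k)
      ((Complex.exp (-s * Complex.log (1 - t)) - 1) / s) := by
  have hrow (k : ℕ) : HasSum (fun N => compositionSeries s t (k, N))
      (s ^ k / (k + 1).factorial * (-Complex.log (1 - t)) ^ (k + 1)) := by
    rw [← (Complex.hasSum_taylorSeries_neg_log ht).tsum_eq]
    simpa only [compositionSeries] using
      (hasSum_pow_mul_compositionSum (summable_norm_pow_div_natCast ht) (k + 1)).mul_left
        (s ^ k / (k + 1).factorial)
  have hcol (N : ℕ) : HasSum (fun k => compositionSeries s t (k, N))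
      (∑ k ∈ range N, compositionSeries s t (k, N)) :=
    hasSum_sum_of_ne_finset_zero fun k hk => by
      simp [compositionSeries, compositionSum_eq_zero_of_lt (show N < k + 1 by simpa using hk)]
  have h := hasSum_fiberwise_comm (summable_compositionSeries hs ht) hrow hcol
    (hasSum_pow_mul_pow_succ_div_factorial hs _)
  rw [← Complex.exp_eq_exp_ℂ, mul_neg, ← neg_mul] at h
  simpa [mul_sum, pow_div_factorial_mul_aCoeff_mul_pow] using (hasSum_nat_add_iff' 1).mpr h
end

section
/- Let u ∈ ℂ with u ≠ 1. Then there exists r > 0 such that for every t ∈ ℂ with |t| < r, the series ∑_{n=0}^{∞} H_n(u)·t^n/n! converges and equals (1−u)/(exp t − u). -/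
/-!
The function `f t = (1 - u) / (exp t - u)` is holomorphic on a disc around `0` (as `exp 0 = 1 ≠ u`),
so its Taylor series at `0` converges to it there. Differentiating `f · (exp - u) = 1 - u`
`n ≥ 1` times at `0` with the Leibniz rule gives `∑_{l ≤ n} C(n,l) f⁽ˡ⁾(0) = u f⁽ⁿ⁾(0)`, which
together with `f(0) = 1` is the recurrence defining `H_n(u)`; hence `f⁽ⁿ⁾(0) = H_n(u)`.
-/

open Finset

/-- The Frobenius–Euler numbers `H_n(u)`, defined by `H_0(u) = 1` and the recurrence
`∑_{l=0}^{n} C(n,l)·H_l(u) = u·H_n(u)` for `n ≥ 1`, solved for `H_n(u)`. -/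
noncomputable def FE (u : ℂ) : ℕ → ℂ
  | 0 => 1
  | n + 1 => (u - 1)⁻¹ * ∑ l : Fin (n + 1), ((n + 1).choose (l : ℕ) : ℂ) * FE u l

lemma FE_succ (u : ℂ) (n : ℕ) :
    FE u (n + 1) = (u - 1)⁻¹ * ∑ l ∈ range (n + 1), ((n + 1).choose l : ℂ) * FE u l := by
  rw [FE, Fin.sum_univ_eq_sum_range (fun l => ((n + 1).choose l : ℂ) * FE u l)]

theorem eq_FE_of_sum_choose_mul_eq {u : ℂ} (hu : u ≠ 1) {a : ℕ → ℂ} (h0 : a 0 = 1)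
    (hrec : ∀ n, ∑ l ∈ range (n + 2), ((n + 1).choose l : ℂ) * a l = u * a (n + 1)) :
    a = FE u := by
  funext n
  induction n using Nat.strong_induction_on with
  | _ n ih =>
    obtain _ | n := n
    · simp [h0, FE]
    have hsum : ∑ l ∈ range (n + 1), ((n + 1).choose l : ℂ) * a l = (u - 1) * a (n + 1) := by
      have := hrec n
      rw [sum_range_succ, Nat.choose_self] at this
      linear_combination this
    calc a (n + 1) = (u - 1)⁻¹ * ∑ l ∈ range (n + 1), ((n + 1).choose l : ℂ) * a l := by
          rw [hsum, inv_mul_cancel_left₀ (sub_ne_zero.mpr hu)]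
      _ = FE u (n + 1) := by
          rw [FE_succ]
          exact congrArg _ (sum_congr rfl fun l hl => by rw [ih l (by simpa using hl)])

theorem iteratedDeriv_mul_cexp {f : ℂ → ℂ} {x : ℂ} {n : ℕ} (hf : ContDiffAt ℂ n f x) :
    iteratedDeriv n (fun t => f t * Complex.exp t) x
      = (∑ i ∈ range (n + 1), n.choose i * iteratedDeriv i f x) * Complex.exp x := by
  rw [iteratedDeriv_fun_mul hf Complex.contDiff_exp.contDiffAt, sum_mul]
  simp only [iteratedDeriv_eq_iterate, Complex.iter_deriv_exp]

theorem eventually_cexp_ne {u : ℂ} (hu : u ≠ 1) : ∀ᶠ t in nhds 0, Complex.exp t ≠ u :=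
  Complex.continuous_exp.continuousAt.eventually_ne (by simpa using hu.symm)

theorem iteratedDeriv_one_sub_div_cexp_sub_zero {u : ℂ} (hu : u ≠ 1) (n : ℕ) :
    iteratedDeriv n (fun t => (1 - u) / (Complex.exp t - u)) 0 = FE u n := by
  set f := fun t => (1 - u) / (Complex.exp t - u)
  have hmul : (fun t => f t * Complex.exp t - u * f t) =ᶠ[nhds 0] fun _ => 1 - u := by
    filter_upwards [eventually_cexp_ne hu] with t ht
    linear_combination div_mul_cancel₀ (1 - u) (sub_ne_zero.mpr ht)
  refine congrFun (eq_FE_of_sum_choose_mul_eq (a := fun n => iteratedDeriv n f 0) hu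
    (by simp [f, sub_ne_zero.mpr hu.symm]) fun n => ?_) n
  have hf : ContDiffAt ℂ (n + 1 : ℕ) f 0 := by
    fun_prop (disch := simpa [sub_eq_zero] using hu.symm)
  have := (hmul.iteratedDeriv (n + 1)).eq_of_nhds
  rw [iteratedDeriv_fun_sub (hf.mul Complex.contDiff_exp.contDiffAt) (contDiffAt_const.mul hf),
    iteratedDeriv_mul_cexp hf, iteratedDeriv_const_mul _ hf, iteratedDeriv_const] at this
  simpa [sub_eq_zero] using this

theorem frobenius_euler_generating_function (u : ℂ) (hu : u ≠ 1) :
    ∃ r > (0 : ℝ), ∀ t : ℂ, ‖t‖ < r →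
      HasSum (fun n : ℕ => FE u n * t ^ n / (n.factorial : ℂ))
        ((1 - u) / (Complex.exp t - u)) := by
  obtain ⟨r, hr, hball⟩ := Metric.eventually_nhds_iff_ball.1 (eventually_cexp_ne hu)
  refine ⟨r, hr, fun t ht => ?_⟩
  have hf : DifferentiableOn ℂ (fun t => (1 - u) / (Complex.exp t - u)) (Metric.ball 0 r) :=
    fun z hz => ((differentiableAt_const _).div (Complex.differentiable_exp.sub_const u z)
      (sub_ne_zero.mpr (hball z hz))).differentiableWithinAt
  have hcoef (n : ℕ) : (n.factorial : ℂ)⁻¹ • (t - 0) ^ n •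
      iteratedDeriv n (fun t => (1 - u) / (Complex.exp t - u)) 0
      = FE u n * t ^ n / n.factorial := by
    rw [iteratedDeriv_one_sub_div_cexp_sub_zero hu n, sub_zero, smul_eq_mul, smul_eq_mul]
    ring
  simpa only [hcoef] using Complex.hasSum_taylorSeries_on_ball hf (mem_ball_zero_iff.2 ht)
end

section
/- Let α, β ∈ ℂ with α ≠ 1, β ≠ 1 and α·β ≠ 1, let x ∈ ℂ, and let m, n ≥ 0 be integers. Then H_m(x|α)·H_n(x|β) = ((1−α)(1−β)/(1−αβ))·H_{m+n}(x|αβ) + (α(1−β)/(1−αβ))·∑_{r=0}^{m} C(m,r)·H_r(α)·H_{m+n−r}(x|αβ) + (β(1−α)/(1−αβ))·∑_{s=0}^{n} C(n,s)·H_s(β)·H_{m+n−s}(x|αβ). -/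
open Finset

/-- The Frobenius–Euler polynomials `H_n(x|u) = ∑_{l=0}^{n} C(n,l)·x^{n-l}·H_l(u)`. -/
noncomputable def FEpoly (u x : ℂ) (n : ℕ) : ℂ :=
  ∑ l ∈ Finset.range (n + 1), (n.choose l : ℂ) * x ^ (n - l) * FE u l

/-! Frobenius–Euler polynomials satisfy the difference equation
`H_n(x+1|u) = u·H_n(x|u) + (1-u)·xⁿ`. Applied to both sides of the product formula (with
`∑_r C(m,r)·H_r(α)·x^{m+n-r} = xⁿ·H_m(x|α)` on the right) it shows that the difference `D` of
the two sides, a polynomial in `x`, satisfies `D(x+1) = αβ·D(x)`. Comparing leading coefficients,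
a nonzero polynomial can only do this when `αβ = 1`. -/

open Polynomial

theorem Polynomial.eq_zero_of_eval_add_eq_mul {R : Type*} [CommRing R] [IsDomain R] [Infinite R]
    {p : R[X]} {a c : R} (hc : c ≠ 1) (h : ∀ x, p.eval (x + a) = c * p.eval x) : p = 0 := by
  have hcomp : p.comp (X + C a) = C c * p := Polynomial.funext fun x => by simp [h]
  have hlead := congrArg leadingCoeff hcomp
  rw [leadingCoeff_comp (by rw [natDegree_X_add_C]; exact one_ne_zero), leadingCoeff_X_add_C,
    one_pow, mul_one, leadingCoeff_mul, leadingCoeff_C] at hlead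
  have : (1 - c) * p.leadingCoeff = 0 := by linear_combination hlead
  simpa [sub_eq_zero, hc.symm] using this

theorem sum_choose_mul_add_pow_mul {R : Type*} [CommSemiring R] (a : ℕ → R) (x y : R) (n : ℕ) :
    ∑ l ∈ range (n + 1), (n.choose l : R) * (x + y) ^ (n - l) * a l =
      ∑ k ∈ range (n + 1), (n.choose k : R) * x ^ (n - k) *
        ∑ l ∈ range (k + 1), (k.choose l : R) * y ^ (k - l) * a l := by
  calc _ = ∑ l ∈ range (n + 1), (n.choose l : R) * a l *
        ∑ j ∈ range (n - l + 1), ((n - l).choose j : R) * x ^ (n - l - j) * y ^ j := by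
        refine sum_congr rfl fun l _ => ?_
        rw [add_comm x, add_pow, mul_sum, sum_mul, mul_sum]
        refine sum_congr rfl fun j _ => ?_
        ring
    _ = ∑ l ∈ range (n + 1), ∑ k ∈ Ico l (n + 1),
        ((n.choose k * k.choose l : ℕ) : R) * x ^ (n - k) * y ^ (k - l) * a l := by
        refine sum_congr rfl fun l hl => ?_
        rw [sum_Ico_eq_sum_range, mul_sum, Nat.sub_add_comm (by simpa [Nat.lt_succ_iff] using hl)]
        refine sum_congr rfl fun j hj => ?_
        have hj : j ≤ n - l := by simpa [Nat.lt_succ_iff] using hj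
        rw [Nat.choose_mul (by omega), Nat.add_sub_cancel_left, show n - (l + j) = n - l - j by omega]
        push_cast; ring
    _ = ∑ k ∈ range (n + 1), ∑ l ∈ range (k + 1),
        ((n.choose k * k.choose l : ℕ) : R) * x ^ (n - k) * y ^ (k - l) * a l :=
        (sum_comm' fun k l => by simp only [mem_range, mem_Ico]; omega).symm
    _ = _ := by
        refine sum_congr rfl fun k _ => ?_
        rw [mul_sum]
        refine sum_congr rfl fun l _ => ?_
        push_cast; ring

theorem sum_range_choose_mul_FE {u : ℂ} (hu : u ≠ 1) (k : ℕ) :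
    ∑ l ∈ range (k + 1), (k.choose l : ℂ) * FE u l = u * FE u k + if k = 0 then 1 - u else 0 := by
  cases k with
  | zero => simp [FE]
  | succ k =>
    have hrec : (u - 1) * FE u (k + 1) = ∑ l ∈ range (k + 1), ((k + 1).choose l : ℂ) * FE u l := by
      rw [FE, Fin.sum_univ_eq_sum_range (fun l => ((k + 1).choose l : ℂ) * FE u l),
        mul_inv_cancel_left₀ (sub_ne_zero.mpr hu)]
    rw [sum_range_succ, ← hrec, Nat.choose_self, Nat.cast_one, if_neg k.succ_ne_zero]
    ring

theorem FEpoly_add (u x y : ℂ) (n : ℕ) :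
    FEpoly u (x + y) n = ∑ k ∈ range (n + 1), (n.choose k : ℂ) * x ^ (n - k) * FEpoly u y k :=
  sum_choose_mul_add_pow_mul (FE u) x y n

theorem FEpoly_one {u : ℂ} (hu : u ≠ 1) (k : ℕ) :
    FEpoly u 1 k = u * FE u k + if k = 0 then 1 - u else 0 := by
  simp only [FEpoly, one_pow, mul_one, sum_range_choose_mul_FE hu]

theorem FEpoly_add_one {u : ℂ} (hu : u ≠ 1) (x : ℂ) (n : ℕ) :
    FEpoly u (x + 1) n = u * FEpoly u x n + (1 - u) * x ^ n := by
  simp only [FEpoly_add, FEpoly_one hu, mul_add, sum_add_distrib, mul_ite, mul_zero, sum_ite_eq',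
    mem_range, Nat.zero_lt_succ, if_true, Nat.choose_zero_right, Nat.sub_zero]
  rw [FEpoly, mul_sum]
  congr 1
  · exact sum_congr rfl fun k _ => by ring
  · push_cast; ring

theorem sum_choose_mul_FE_mul_pow (u x : ℂ) {m N : ℕ} (hmN : m ≤ N) :
    ∑ r ∈ range (m + 1), (m.choose r : ℂ) * FE u r * x ^ (N - r) = x ^ (N - m) * FEpoly u x m := by
  rw [FEpoly, mul_sum]
  refine sum_congr rfl fun r hr => ?_
  rw [show N - r = (N - m) + (m - r) by have := mem_range_succ_iff.mp hr; omega, pow_add]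
  ring

theorem sum_choose_mul_FE_mul_FEpoly_add_one (u : ℂ) {v : ℂ} (hv : v ≠ 1) (x : ℂ) {m N : ℕ}
    (hmN : m ≤ N) :
    ∑ r ∈ range (m + 1), (m.choose r : ℂ) * FE u r * FEpoly v (x + 1) (N - r) =
      v * ∑ r ∈ range (m + 1), (m.choose r : ℂ) * FE u r * FEpoly v x (N - r) +
        (1 - v) * x ^ (N - m) * FEpoly u x m := by
  simp only [FEpoly_add_one hv, mul_add, sum_add_distrib, mul_sum]
  rw [mul_assoc, ← sum_choose_mul_FE_mul_pow u x hmN, mul_sum]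
  congr 1 <;> exact sum_congr rfl fun r _ => by ring

noncomputable def FEpolynomial (u : ℂ) (n : ℕ) : ℂ[X] :=
  ∑ l ∈ range (n + 1), C ((n.choose l : ℂ) * FE u l) * X ^ (n - l)

theorem eval_FEpolynomial (u x : ℂ) (n : ℕ) : (FEpolynomial u n).eval x = FEpoly u x n := by
  simp only [FEpolynomial, FEpoly, eval_finsetSum, eval_mul, eval_C, eval_pow, eval_X]
  exact sum_congr rfl fun l _ => by ring

theorem FEpolynomial_mul_FEpolynomial {α β : ℂ} (hα : α ≠ 1) (hβ : β ≠ 1) (hαβ : α * β ≠ 1)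
    (m n : ℕ) :
    FEpolynomial α m * FEpolynomial β n =
      C ((1 - α) * (1 - β) / (1 - α * β)) * FEpolynomial (α * β) (m + n) +
        C (α * (1 - β) / (1 - α * β)) *
          ∑ r ∈ range (m + 1), C ((m.choose r : ℂ) * FE α r) * FEpolynomial (α * β) (m + n - r) +
        C (β * (1 - α) / (1 - α * β)) *
          ∑ s ∈ range (n + 1), C ((n.choose s : ℂ) * FE β s) * FEpolynomial (α * β) (m + n - s) := by
  rw [← sub_eq_zero]
  refine eq_zero_of_eval_add_eq_mul (a := 1) hαβ fun x => ?_
  simp only [eval_sub, eval_add, eval_mul, eval_C, eval_finsetSum, eval_FEpolynomial]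
  rw [FEpoly_add_one hα, FEpoly_add_one hβ, FEpoly_add_one hαβ,
    sum_choose_mul_FE_mul_FEpoly_add_one α hαβ x (Nat.le_add_right m n),
    sum_choose_mul_FE_mul_FEpoly_add_one β hαβ x (Nat.le_add_left n m),
    Nat.add_sub_cancel_left, Nat.add_sub_cancel]
  have hden : 1 - α * β ≠ 0 := sub_ne_zero.mpr hαβ.symm
  field_simp
  ring

theorem carlitz_product_formula (α β : ℂ) (hα : α ≠ 1) (hβ : β ≠ 1) (hαβ : α * β ≠ 1)
    (x : ℂ) (m n : ℕ) :
    FEpoly α x m * FEpoly β x n =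
      ((1 - α) * (1 - β) / (1 - α * β)) * FEpoly (α * β) x (m + n) +
        (α * (1 - β) / (1 - α * β)) *
          ∑ r ∈ Finset.range (m + 1), (m.choose r : ℂ) * FE α r * FEpoly (α * β) x (m + n - r) +
        (β * (1 - α) / (1 - α * β)) *
          ∑ s ∈ Finset.range (n + 1), (n.choose s : ℂ) * FE β s * FEpoly (α * β) x (m + n - s) := by
  simpa only [eval_mul, eval_add, eval_C, eval_finsetSum, eval_FEpolynomial] using
    congrArg (eval x) (FEpolynomial_mul_FEpolynomial hα hβ hαβ m n)
end

section
/- Let m, n ≥ 1 be integers with m + n ≥ 2, and let x ∈ ℂ. Then B_m(x)·B_n(x) = ∑_{r=0}^{⌊(m+n)/2⌋} (C(m,2r)·n + C(n,2r)·m) · B_{2r}·B_{m+n−2r}(x)/(m+n−2r) + (−1)^{m+1}·(m!·n!/(m+n)!)·B_{m+n}, where B_{2r} denotes the (2r)-th Bernoulli number and terms with C(m,2r) = C(n,2r) = 0 vanish (in particular every term with 2r = m+n vanishes, since m, n ≥ 1). -/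
open Finset

/-- The Bernoulli polynomials evaluated at a complex number, with the convention
`B₁(0) = -1/2`. -/
noncomputable def bernoulliPoly (n : ℕ) (x : ℂ) : ℂ :=
  Polynomial.aeval x (Polynomial.bernoulli n)

/-!
Let `Q` be the difference of the two sides, as a polynomial over `ℚ`. Since
`B_k(1 + x) - B_k(x) = k x^(k-1)` and `B_j = 0` for odd `j > 1`, the forward difference of the sum
over `r` is `Δ(B_m B_n)`, so `Q` is `1`-periodic, hence constant. Its integral over `[0, 1]` is
zero, because `∫₀¹ B_k = 0` for `k ≥ 1` and repeated integration by parts gives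
`∫₀¹ B_m B_n = (-1)^(m+1) m! n! / (m + n)! · B_(m+n)`. All integrals are taken formally, on
polynomials.
-/

open scoped Nat

theorem sum_range_bernoulli_smul {M : Type*} [AddCommGroup M] [Module ℚ M] (f : ℕ → M) {N : ℕ}
    (hN : 1 ≤ N) :
    ∑ j ∈ range (N + 1), bernoulli j • f j =
      ∑ r ∈ range (N / 2 + 1), bernoulli (2 * r) • f (2 * r) + bernoulli 1 • f 1 := by
  induction N, hN using Nat.le_induction with
  | base => simp [sum_range_succ]
  | succ N hN ih =>
    rw [sum_range_succ, ih]
    rcases Nat.even_or_odd (N + 1) with ⟨k, hk⟩ | hodd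
    · rw [show (N + 1) / 2 = N / 2 + 1 by omega, sum_range_succ _ (N / 2 + 1),
        show 2 * (N / 2 + 1) = N + 1 by omega]
      abel
    · rw [show (N + 1) / 2 = N / 2 by rcases hodd with ⟨k, hk⟩; omega,
        bernoulli_eq_zero_of_odd hodd (by omega), zero_smul, add_zero]

namespace Polynomial

section FormalIntegral

variable {K : Type*} [Field K]

/-- `∫₀¹ p(x) dx`, computed formally from `∫₀¹ xᵏ dx = 1 / (k + 1)`. -/
noncomputable def integralZeroOne : K[X] →ₗ[K] K :=
  lsum fun k => (k + 1 : K)⁻¹ • LinearMap.id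

theorem integralZeroOne_monomial (k : ℕ) (a : K) :
    integralZeroOne (monomial k a) = a / (k + 1) := by
  simp [integralZeroOne, div_eq_inv_mul]

theorem integralZeroOne_derivative [CharZero K] (p : K[X]) :
    integralZeroOne (derivative p) = p.eval 1 - p.eval 0 := by
  induction p using Polynomial.induction_on' with
  | add p q hp hq => rw [map_add, map_add, hp, hq, eval_add, eval_add]; ring
  | monomial n a =>
    cases n with
    | zero => simp
    | succ k =>
      rw [derivative_monomial_succ, integralZeroOne_monomial, eval_monomial, eval_monomial,
        one_pow, zero_pow k.succ_ne_zero, mul_one, mul_zero, sub_zero]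
      exact mul_div_cancel_right₀ a (Nat.cast_add_one_ne_zero k)

theorem integralZeroOne_C (a : K) : integralZeroOne (C a) = a := by
  simp [integralZeroOne]

theorem integralZeroOne_C_mul (a : K) (p : K[X]) :
    integralZeroOne (C a * p) = a * integralZeroOne p := by
  rw [C_mul', map_smul, smul_eq_mul]

end FormalIntegral

theorem eq_C_eval_zero_of_comp_one_add_X {R : Type*} [CommRing R] [IsDomain R] [CharZero R]
    {p : R[X]} (h : p.comp (1 + X) = p) : p = C (p.eval 0) := by
  have eval_natCast : ∀ k : ℕ, p.eval (k : R) = p.eval 0 := by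
    intro k
    induction k with
    | zero => simp
    | succ k ih => simpa [eval_comp, add_comm, ih] using congrArg (eval (k : R)) h
  refine eq_of_infinite_eval_eq _ _ (Set.infinite_of_injective_forall_mem Nat.cast_injective ?_)
  simpa using eval_natCast

theorem integralZeroOne_natCast_add_one_mul (k : ℕ) (p : ℚ[X]) :
    integralZeroOne (((k : ℚ[X]) + 1) * p) = (k + 1 : ℚ) * integralZeroOne p := by
  rw [← integralZeroOne_C_mul]; simp

theorem integralZeroOne_bernoulli {k : ℕ} (hk : k ≠ 0) : integralZeroOne (bernoulli k) = 0 := by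
  have h := integralZeroOne_derivative (bernoulli (k + 1))
  rw [derivative_bernoulli_add_one, integralZeroOne_natCast_add_one_mul, bernoulli_eval_one,
    bernoulli_eval_zero, bernoulli_eq_bernoulli'_of_ne_one (by omega), sub_self] at h
  exact (mul_eq_zero.mp h).resolve_left (Nat.cast_add_one_ne_zero k)

theorem integralZeroOne_bernoulli_parts (a b : ℕ) :
    (a + 1 : ℚ) * integralZeroOne (bernoulli a * bernoulli (b + 1)) +
        (b + 1 : ℚ) * integralZeroOne (bernoulli (a + 1) * bernoulli b) =
      bernoulli' (a + 1) * bernoulli' (b + 1) -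
        _root_.bernoulli (a + 1) * _root_.bernoulli (b + 1) := by
  have hderiv : derivative (bernoulli (a + 1) * bernoulli (b + 1)) =
      ((a : ℚ[X]) + 1) * (bernoulli a * bernoulli (b + 1)) +
        ((b : ℚ[X]) + 1) * (bernoulli (a + 1) * bernoulli b) := by
    rw [derivative_mul, derivative_bernoulli_add_one, derivative_bernoulli_add_one]; ring
  have h := integralZeroOne_derivative (bernoulli (a + 1) * bernoulli (b + 1))
  rw [hderiv, map_add, integralZeroOne_natCast_add_one_mul,
    integralZeroOne_natCast_add_one_mul] at h
  simpa using h

theorem integralZeroOne_bernoulli_mul_bernoulli {m n : ℕ} (hm : m ≠ 0) (hn : n ≠ 0) :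
    integralZeroOne (bernoulli m * bernoulli n) =
      (-1) ^ (m + 1) * ((m ! : ℚ) * n ! / (m + n)!) * _root_.bernoulli (m + n) := by
  obtain ⟨m, rfl⟩ := Nat.exists_eq_add_one_of_ne_zero hm
  induction m generalizing n with
  | zero =>
    obtain ⟨n, rfl⟩ := Nat.exists_eq_add_one_of_ne_zero hn
    have h := integralZeroOne_bernoulli_parts 0 (n + 1)
    rw [bernoulli_zero, one_mul, integralZeroOne_bernoulli (by omega), bernoulli'_one,
      _root_.bernoulli_one, ← bernoulli_eq_bernoulli'_of_ne_one (by omega)] at h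
    have hn2 : (n + 1 + 1 : ℚ) ≠ 0 := by positivity
    rw [show 0 + 1 + (n + 1) = n + 1 + 1 by omega]
    apply mul_left_cancel₀ hn2
    push_cast [Nat.factorial_succ] at h ⊢
    field_simp
    linear_combination h
  | succ m ih =>
    have h := integralZeroOne_bernoulli_parts (m + 1) n
    rw [ih (by omega) (by omega), ← bernoulli_eq_bernoulli'_of_ne_one (by omega),
      ← bernoulli_eq_bernoulli'_of_ne_one (by omega), sub_self] at h
    have hn1 : (n + 1 : ℚ) ≠ 0 := by positivity
    rw [show m + 1 + (n + 1) = m + 1 + 1 + n by omega] at h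
    apply mul_left_cancel₀ hn1
    push_cast [Nat.factorial_succ] at h ⊢
    linear_combination h

theorem X_pow_mul_bernoulli_eq_sum (k : ℕ) {n N : ℕ} (h : n ≤ N) :
    X ^ k * bernoulli n =
      ∑ i ∈ range (N + 1), monomial (k + n - i) (_root_.bernoulli i * n.choose i) := by
  calc X ^ k * bernoulli n
      = ∑ i ∈ range (n + 1), monomial (k + n - i) (_root_.bernoulli i * n.choose i) := by
        rw [bernoulli, mul_sum]
        refine sum_congr rfl fun i hi => ?_
        have := mem_range.1 hi
        rw [X_pow_mul_monomial, show n - i + k = k + n - i by omega]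
    _ = _ := by
        refine sum_subset (range_subset_range.2 (by omega)) fun i _ hi => ?_
        have : n < i := by simpa using hi
        simp [Nat.choose_eq_zero_of_lt this]

theorem sum_choose_mul_bernoulli_monomial {m n : ℕ} (hm : m ≠ 0) (hn : n ≠ 0) :
    ∑ r ∈ range ((m + n) / 2 + 1), monomial (m + n - 2 * r - 1)
        (((m.choose (2 * r) : ℚ) * n + n.choose (2 * r) * m) * _root_.bernoulli (2 * r)) =
      m • X ^ (m - 1) * bernoulli n + n • X ^ (n - 1) * bernoulli m +
        (m * n) • X ^ (m + n - 2) := by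
  set f : ℕ → ℚ[X] := fun j => monomial (m + n - 1 - j) ((m.choose j : ℚ) * n + n.choose j * m)
  have hall : ∑ j ∈ range (m + n + 1), _root_.bernoulli j • f j =
      m • X ^ (m - 1) * bernoulli n + n • X ^ (n - 1) * bernoulli m := by
    rw [smul_mul_assoc, smul_mul_assoc, X_pow_mul_bernoulli_eq_sum _ (by omega : n ≤ m + n),
      X_pow_mul_bernoulli_eq_sum _ (by omega : m ≤ m + n), smul_sum, smul_sum, ← sum_add_distrib]
    refine sum_congr rfl fun j _ => ?_
    rw [show m - 1 + n - j = m + n - 1 - j by omega, show n - 1 + m - j = m + n - 1 - j by omega,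
      smul_monomial, smul_monomial, smul_monomial, ← map_add]
    congr 1
    simp only [smul_eq_mul, nsmul_eq_mul]
    ring
  have hone : _root_.bernoulli 1 • f 1 = -((m * n) • X ^ (m + n - 2)) := by
    simp only [f, _root_.bernoulli_one, smul_monomial, Nat.choose_one_right,
      show m + n - 1 - 1 = m + n - 2 by omega]
    rw [X_pow_eq_monomial, smul_monomial, ← map_neg]
    congr 1
    simp only [smul_eq_mul, nsmul_eq_mul]
    push_cast
    ring
  have hsplit := sum_range_bernoulli_smul f (N := m + n) (by omega)
  rw [hall, hone] at hsplit
  rw [hsplit, neg_add_cancel_right]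
  refine sum_congr rfl fun r _ => ?_
  rw [smul_monomial, smul_eq_mul, mul_comm (_root_.bernoulli _), Nat.sub_right_comm]

/-- At `2 * r = m + n` this divides by zero; the numerator vanishes there anyway when
`m, n ≠ 0`. -/
noncomputable def nielsenCoeff (m n r : ℕ) : ℚ :=
  ((m.choose (2 * r) : ℚ) * n + n.choose (2 * r) * m) * _root_.bernoulli (2 * r) /
    (m + n - 2 * r : ℕ)

noncomputable def nielsenSum (m n : ℕ) : ℚ[X] :=
  ∑ r ∈ range ((m + n) / 2 + 1), C (nielsenCoeff m n r) * bernoulli (m + n - 2 * r)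

theorem nielsenCoeff_mul {m n : ℕ} (hm : m ≠ 0) (hn : n ≠ 0) (r : ℕ) :
    nielsenCoeff m n r * (m + n - 2 * r : ℕ) =
      ((m.choose (2 * r) : ℚ) * n + n.choose (2 * r) * m) * _root_.bernoulli (2 * r) := by
  rcases eq_or_ne (m + n - 2 * r) 0 with h | h
  · have hmr : m < 2 * r := by omega
    have hnr : n < 2 * r := by omega
    simp [nielsenCoeff, h, Nat.choose_eq_zero_of_lt hmr, Nat.choose_eq_zero_of_lt hnr]
  · exact div_mul_cancel₀ _ (by exact_mod_cast h)

theorem nielsenSum_comp_one_add_X {m n : ℕ} (hm : m ≠ 0) (hn : n ≠ 0) :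
    (nielsenSum m n).comp (1 + X) = nielsenSum m n +
      (m • X ^ (m - 1) * bernoulli n + n • X ^ (n - 1) * bernoulli m +
        (m * n) • X ^ (m + n - 2)) := by
  rw [← sum_choose_mul_bernoulli_monomial hm hn, nielsenSum, sum_comp, ← sum_add_distrib]
  refine sum_congr rfl fun r _ => ?_
  rw [mul_comp, C_comp, bernoulli_comp_one_add_X, mul_add, ← nielsenCoeff_mul hm hn r,
    ← C_mul_X_pow_eq_monomial, nsmul_eq_mul, map_mul, map_natCast]
  ring

theorem integralZeroOne_nielsenSum (m n : ℕ) : integralZeroOne (nielsenSum m n) = 0 := by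
  rw [nielsenSum, map_sum]
  refine sum_eq_zero fun r _ => ?_
  rw [integralZeroOne_C_mul]
  rcases eq_or_ne (m + n - 2 * r) 0 with h | h
  · simp [nielsenCoeff, h]
  · rw [integralZeroOne_bernoulli h, mul_zero]

theorem bernoulli_mul_bernoulli {m n : ℕ} (hm : m ≠ 0) (hn : n ≠ 0) :
    bernoulli m * bernoulli n = nielsenSum m n +
      C ((-1) ^ (m + 1) * ((m ! : ℚ) * n ! / (m + n)!) * _root_.bernoulli (m + n)) := by
  set q := bernoulli m * bernoulli n - (nielsenSum m n +
      C ((-1) ^ (m + 1) * ((m ! : ℚ) * n ! / (m + n)!) * _root_.bernoulli (m + n))) with hq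
  have hperiodic : q.comp (1 + X) = q := by
    have hpow : (X : ℚ[X]) ^ (m - 1) * X ^ (n - 1) = X ^ (m + n - 2) := by
      rw [← pow_add]; congr 1; omega
    rw [hq, sub_comp, add_comp, mul_comp, C_comp, bernoulli_comp_one_add_X,
      bernoulli_comp_one_add_X, nielsenSum_comp_one_add_X hm hn]
    simp only [nsmul_eq_mul, Nat.cast_mul]
    linear_combination ((m : ℚ[X]) * n) * hpow
  have hintegral : integralZeroOne q = 0 := by
    rw [hq, map_sub, map_add, integralZeroOne_bernoulli_mul_bernoulli hm hn,
      integralZeroOne_nielsenSum, integralZeroOne_C, zero_add, sub_self]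
  have hconst := eq_C_eval_zero_of_comp_one_add_X hperiodic
  rw [hconst, integralZeroOne_C] at hintegral
  rw [← sub_eq_zero]
  exact hconst.trans (by rw [hintegral, map_zero])

end Polynomial

theorem bernoulli_poly_product_general (m n : ℕ) (hm : 1 ≤ m) (hn : 1 ≤ n)
    (x : ℂ) :
    bernoulliPoly m x * bernoulliPoly n x =
      (∑ r ∈ Finset.range ((m + n) / 2 + 1),
        ((m.choose (2 * r) : ℂ) * n + (n.choose (2 * r) : ℂ) * m) *
          ((bernoulli (2 * r) : ℂ) * bernoulliPoly (m + n - 2 * r) x /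
            ((m + n - 2 * r : ℕ) : ℂ))) +
      (-1 : ℂ) ^ (m + 1) * ((m.factorial : ℂ) * (n.factorial : ℂ) /
        ((m + n).factorial : ℂ)) * (bernoulli (m + n) : ℂ) := by
  have h := congrArg (Polynomial.aeval x)
    (Polynomial.bernoulli_mul_bernoulli (m := m) (n := n) (by omega) (by omega))
  simp only [map_mul, map_add, map_sum, Polynomial.nielsenSum, Polynomial.aeval_C,
    Polynomial.nielsenCoeff, eq_ratCast] at h
  simp only [bernoulliPoly, h]
  push_cast
  congr 1
  refine sum_congr rfl fun r _ => ?_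
  ring

/-- Nielsen's formula for the product of two Bernoulli polynomials. -/
theorem bernoulli_poly_product (m n : ℕ) (hm : 1 ≤ m) (hn : 1 ≤ n) (hmn : 2 ≤ m + n)
    (x : ℂ) :
    bernoulliPoly m x * bernoulliPoly n x =
      (∑ r ∈ Finset.range ((m + n) / 2 + 1),
        ((m.choose (2 * r) : ℂ) * n + (n.choose (2 * r) : ℂ) * m) *
          ((bernoulli (2 * r) : ℂ) * bernoulliPoly (m + n - 2 * r) x /
            ((m + n - 2 * r : ℕ) : ℂ))) +
      (-1 : ℂ) ^ (m + 1) * ((m.factorial : ℂ) * (n.factorial : ℂ) /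
        ((m + n).factorial : ℂ)) * (bernoulli (m + n) : ℂ) :=
  bernoulli_poly_product_general m n hm hn x
end
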